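/- In the reduction instance, let π=⟨v_0,…,v_k⟩ be a path with v_0 = a_1 and let T be the no-wait timing profile, i.e. t_0 = ℓ⁺_π(v_0) and t_j = t_{j−1} + ℓ⁺_π(v_{j−1},v_j) for j ≥ 1. Then for every index j such that v_j = a_i for some 1 ≤ i ≤ n, the arrival time at a_i (which equals t_{j−1} when j ≥ 1, since all edges incident to a_i have length 0, and equals 0 when j = 0) lies in the interval [y_{i−1}, y_i], where y_0 := 0. -/
import Mathlib


open MeasureTheory
open scoped Classical

/-- Vertices of the reduction instance: for each hexagon index `i` the vertices
`a i, b i, c i, d i, e i, f i`, plus the two special vertices `u` and `w`. -/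
inductive RVert : Type
  | a : ℕ → RVert
  | b : ℕ → RVert
  | c : ℕ → RVert
  | d : ℕ → RVert
  | e : ℕ → RVert
  | f : ℕ → RVert
  | u : RVert
  | w : RVert
deriving DecidableEq

/-- `κ_i = Σ_{j=1}^{i} x_j` (so `κ_0 = 0`). -/
def kap (x : ℕ → ℕ) (i : ℕ) : ℕ := ∑ j ∈ Finset.Icc 1 i, x j

/-- `y_i = Σ_{j=1}^{i-1} κ_j` (so `y_0 = y_1 = 0`). -/
def yv (x : ℕ → ℕ) (i : ℕ) : ℕ := ∑ j ∈ Finset.Icc 1 (i - 1), kap x j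

/-- `α_i = x_i / κ_n`. -/
noncomputable def alphav (x : ℕ → ℕ) (n i : ℕ) : ℝ := (x i : ℝ) / (kap x n : ℝ)

/-- Edges of the reduction instance: `a_i→b_i, b_i→c_i, c_i→f_i, a_i→d_i,
d_i→e_i, e_i→f_i` for `1 ≤ i ≤ n`, `f_i→a_{i+1}` for `i < n`, `f_n→u`, `u→w`. -/
def redE (n : ℕ) : RVert → RVert → Prop := fun p q =>
  (∃ i, 1 ≤ i ∧ i ≤ n ∧
    ((p = RVert.a i ∧ q = RVert.b i) ∨ (p = RVert.b i ∧ q = RVert.c i) ∨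
     (p = RVert.c i ∧ q = RVert.f i) ∨ (p = RVert.a i ∧ q = RVert.d i) ∨
     (p = RVert.d i ∧ q = RVert.e i) ∨ (p = RVert.e i ∧ q = RVert.f i))) ∨
  (∃ i, 1 ≤ i ∧ i < n ∧ p = RVert.f i ∧ q = RVert.a (i + 1)) ∨
  (p = RVert.f n ∧ q = RVert.u) ∨ (p = RVert.u ∧ q = RVert.w)

/-- Edge lengths: `ℓ(b_i, c_i) = κ_i`, `ℓ(d_i, e_i) = κ_{i-1}`, all other edges
have length `0`. -/
noncomputable def redLen (x : ℕ → ℕ) : RVert → RVert → ℝ := fun p q =>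
  match p, q with
  | RVert.b i, RVert.c j => if i = j then (kap x i : ℝ) else 0
  | RVert.d i, RVert.e j => if i = j then (kap x (i - 1) : ℝ) else 0
  | _, _ => 0

/-- Assistance intervals: `𝓘(b_i) = 𝓘(c_i) = {[y_i, y_i + α_i]}` for
`1 ≤ i ≤ n`, `𝓘(w) = {[y_n + K, y_n + K + 1]}`, and `𝓘` is empty elsewhere. -/
noncomputable def redI (x : ℕ → ℕ) (n K : ℕ) : RVert → Finset (ℝ × ℝ) := fun p =>
  match p with
  | RVert.b i =>
      if 1 ≤ i ∧ i ≤ n then {((yv x i : ℝ), (yv x i : ℝ) + alphav x n i)} else ∅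
  | RVert.c i =>
      if 1 ≤ i ∧ i ≤ n then {((yv x i : ℝ), (yv x i : ℝ) + alphav x n i)} else ∅
  | RVert.w => {((yv x n : ℝ) + K, (yv x n : ℝ) + K + 1)}
  | _ => ∅

/-- `v 0, v 1, …, v k` is a path in the reduction instance. -/
def rIsPath (n : ℕ) (v : ℕ → RVert) (k : ℕ) : Prop :=
  ∀ i, i < k → redE n (v i) (v (i + 1))

/-- `ℓ_π(v_i)`: length of the path from `v 0` to `v i`. -/
noncomputable def rPathLen (x : ℕ → ℕ) (v : ℕ → RVert) (i : ℕ) : ℝ :=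
  ∑ j ∈ Finset.range i, redLen x (v j) (v (j + 1))

/-- `ℓ⁺_π(v_i)` (with the convention `ℓ(v_k, v_{k+1}) = 0`). -/
noncomputable def rEllPlus (x : ℕ → ℕ) (v : ℕ → RVert) (k i : ℕ) : ℝ :=
  rPathLen x v i + (if i < k then redLen x (v i) (v (i + 1)) / 2 else 0)

/-- Reward at a vertex `p` between times `t` and `t'`:
`R(p, t, t') = Σ_{I ∈ 𝓘(p)} λ([t,t'] ∩ I)`. -/
noncomputable def rvReward (x : ℕ → ℕ) (n K : ℕ) (p : RVert) (t t' : ℝ) : ℝ :=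
  ∑ q ∈ redI x n K p, (volume (Set.Icc t t' ∩ Set.Icc q.1 q.2)).toReal

/-- `T 0, …, T (k-1)` is a timing profile for the path `v 0, …, v k` with time
horizon `H = y_n + K + 1`. -/
def rIsTP (x : ℕ → ℕ) (v : ℕ → RVert) (k : ℕ) (H : ℝ) (T : ℕ → ℝ) : Prop :=
  (1 ≤ k → rEllPlus x v k 0 ≤ T 0) ∧
  (∀ i, i + 2 ≤ k → T i + (rEllPlus x v k (i + 1) - rEllPlus x v k i) ≤ T (i + 1)) ∧
  (1 ≤ k → T (k - 1) + (rEllPlus x v k k - rEllPlus x v k (k - 1)) ≤ H)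

/-- Reward of a timing profile over horizon `H`:
`R(π, T) = Σ_{i=0}^{k} R(v_i, t_{i-1}, t_i)` with `t_{-1} = 0`, `t_k = H`. -/
noncomputable def rProfReward (x : ℕ → ℕ) (n K : ℕ) (v : ℕ → RVert) (k : ℕ)
    (H : ℝ) (T : ℕ → ℝ) : ℝ :=
  ∑ i ∈ Finset.range (k + 1),
    rvReward x n K (v i) (if i = 0 then 0 else T (i - 1)) (if i = k then H else T i)

/-- Admissibility: the robot leaves `u` by time `y_n + K` and the path does not
end at `u`. -/
def rAdmissible (x : ℕ → ℕ) (n K : ℕ) (v : ℕ → RVert) (k : ℕ) (T : ℕ → ℝ) : Prop :=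
  (∀ i, i < k → v i = RVert.u → T i ≤ (yv x n : ℝ) + K) ∧ v k ≠ RVert.u

lemma kap_mono (x : ℕ → ℕ) {i j : ℕ} (h : i ≤ j) : kap x i ≤ kap x j :=
  Finset.sum_le_sum_of_subset (Finset.Icc_subset_Icc_right h)

lemma yv_succ (x : ℕ → ℕ) (i : ℕ) : yv x (i + 1) = yv x i + kap x i := by
  cases i with
  | zero => simp [yv, kap]
  | succ m =>
    unfold yv
    simp only [Nat.add_sub_cancel]
    rw [Finset.sum_Icc_succ_top (by omega : 1 ≤ m + 1)]

/-- Path-length invariant at each vertex type. -/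
def rInv (x : ℕ → ℕ) (n : ℕ) (L : ℝ) : RVert → Prop := fun p =>
  match p with
  | RVert.a i => 1 ≤ i ∧ i ≤ n ∧ (yv x (i-1) : ℝ) ≤ L ∧ L ≤ yv x i
  | RVert.b i => 1 ≤ i ∧ i ≤ n ∧ (yv x (i-1) : ℝ) ≤ L ∧ L ≤ yv x i
  | RVert.d i => 1 ≤ i ∧ i ≤ n ∧ (yv x (i-1) : ℝ) ≤ L ∧ L ≤ yv x i
  | RVert.c i => 1 ≤ i ∧ i ≤ n ∧ (yv x i : ℝ) ≤ L ∧ L ≤ yv x (i+1)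
  | RVert.e i => 1 ≤ i ∧ i ≤ n ∧ (yv x i : ℝ) ≤ L ∧ L ≤ yv x (i+1)
  | RVert.f i => 1 ≤ i ∧ i ≤ n ∧ (yv x i : ℝ) ≤ L ∧ L ≤ yv x (i+1)
  | _ => True

lemma rInv_step (x : ℕ → ℕ) (n : ℕ) (p q : RVert) (L : ℝ)
    (hE : redE n p q) (hI : rInv x n L p) :
    rInv x n (L + redLen x p q) q := by
  have hk : ∀ i : ℕ, 1 ≤ i → (yv x i : ℝ) = yv x (i-1) + kap x (i-1) := by
    intro i hi
    have h := yv_succ x (i-1)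
    have h2 : i - 1 + 1 = i := by omega
    rw [h2] at h
    rw [h]; push_cast; ring
  have hks : ∀ i : ℕ, (yv x (i+1) : ℝ) = yv x i + kap x i := by
    intro i; rw [yv_succ]; push_cast; ring
  have hkm : ∀ i : ℕ, 1 ≤ i → (kap x (i-1) : ℝ) ≤ kap x i := by
    intro i hi; exact_mod_cast kap_mono x (by omega)
  rcases hE with ⟨i, hi1, hin, h⟩ | ⟨i, hi1, hin, hp, hq⟩ | ⟨hp, hq⟩ | ⟨hp, hq⟩
  · rcases h with ⟨hp, hq⟩ | ⟨hp, hq⟩ | ⟨hp, hq⟩ | ⟨hp, hq⟩ | ⟨hp, hq⟩ | ⟨hp, hq⟩ <;>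
      subst hp <;> subst hq <;>
      simp only [rInv, redLen, if_pos rfl, if_true] at hI ⊢ <;>
      obtain ⟨_, _, h1, h2⟩ := hI <;>
      exact ⟨hi1, hin, by linarith [hk i hi1, hks i, hkm i hi1],
        by linarith [hk i hi1, hks i, hkm i hi1]⟩
  · subst hp; subst hq
    simp only [rInv, redLen, Nat.add_sub_cancel] at hI ⊢
    obtain ⟨_, _, h1, h2⟩ := hI
    exact ⟨by omega, by omega, by linarith, by linarith⟩
  · subst hp; subst hq; trivial
  · subst hp; subst hq; trivial

lemma rInv_holds (x : ℕ → ℕ) (n : ℕ) (hn : 1 ≤ n) (v : ℕ → RVert) (k : ℕ)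
    (hpath : rIsPath n v k) (h0 : v 0 = RVert.a 1) :
    ∀ j, j ≤ k → rInv x n (rPathLen x v j) (v j) := by
  intro j
  induction j with
  | zero =>
    intro _
    rw [h0]
    simp [rInv, rPathLen, yv]
    omega
  | succ m ih =>
    intro hm
    have hI := ih (by omega)
    have hE := hpath m (by omega)
    have h : rPathLen x v (m+1) = rPathLen x v m + redLen x (v m) (v (m+1)) := by
      simp [rPathLen, Finset.sum_range_succ]
    rw [h]
    exact rInv_step x n _ _ _ hE hI

lemma redLen_to_a (x : ℕ → ℕ) (p : RVert) (i : ℕ) : redLen x p (RVert.a i) = 0 := by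
  cases p <;> simp [redLen]

lemma T_eq_ellPlus (x : ℕ → ℕ) (v : ℕ → RVert) (k : ℕ) (T : ℕ → ℝ)
    (hT0 : T 0 = rEllPlus x v k 0)
    (hTstep : ∀ j, 1 ≤ j → T j = T (j-1) + (rEllPlus x v k j - rEllPlus x v k (j-1))) :
    ∀ j, T j = rEllPlus x v k j := by
  intro j
  induction j with
  | zero => exact hT0
  | succ m ih =>
    have h := hTstep (m+1) (by omega)
    simp only [Nat.add_sub_cancel] at h
    rw [h, ih]; ring

/-- **arrival times at hexagon entries.** Along any path from
`a_1` with the no-wait timing profile (`t_0 = ℓ⁺(v_0)`,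
`t_j = t_{j-1} + ℓ⁺(v_{j-1}, v_j)` for `j ≥ 1`), the arrival time at `a_i`
(which is `t_{j-1}` when `v_j = a_i` with `j ≥ 1`, and `0` when `j = 0`) lies
in `[y_{i-1}, y_i]`. -/
theorem stmt12 (n : ℕ) (hn : 1 ≤ n) (x : ℕ → ℕ)
    (hx : ∀ i, 1 ≤ i → i ≤ n → 0 < x i)
    (hmono : ∀ i j, 1 ≤ i → i ≤ j → j ≤ n → x i ≤ x j)
    (K : ℕ) (hK : 0 < K) (hKn : K ≤ kap x n)
    (v : ℕ → RVert) (k : ℕ) (hpath : rIsPath n v k) (h0 : v 0 = RVert.a 1)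
    (T : ℕ → ℝ) (hT0 : T 0 = rEllPlus x v k 0)
    (hTstep : ∀ j, 1 ≤ j → T j = T (j - 1) + (rEllPlus x v k j - rEllPlus x v k (j - 1)))
    (j i : ℕ) (hjk : j ≤ k) (hi1 : 1 ≤ i) (hin : i ≤ n) (hvj : v j = RVert.a i) :
    (if j = 0 then (0 : ℝ) else T (j - 1)) ∈
      Set.Icc (yv x (i - 1) : ℝ) (yv x i : ℝ) := by
  have hinv := rInv_holds x n hn v k hpath h0 j hjk
  rw [hvj] at hinv
  simp only [rInv] at hinv
  obtain ⟨-, -, hlow, hhigh⟩ := hinv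
  rcases Nat.eq_zero_or_pos j with hj | hj
  · subst hj
    have hi : i = 1 := by
      rw [h0] at hvj; injection hvj with h'; omega
    subst hi
    simp [yv]
  · obtain ⟨m, rfl⟩ : ∃ m, j = m + 1 := ⟨j - 1, by omega⟩
    simp only [Nat.add_eq_zero, and_false, if_false, Nat.add_sub_cancel,
      Nat.succ_ne_zero, if_neg (Nat.succ_ne_zero m)]
    have hTm := T_eq_ellPlus x v k T hT0 hTstep m
    have hmk : m < k := by omega
    have hlen : redLen x (v m) (v (m+1)) = 0 := by
      rw [hvj]; exact redLen_to_a x _ i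
    have hpl : rPathLen x v (m+1) = rPathLen x v m := by
      simp [rPathLen, Finset.sum_range_succ, hlen]
    have hT : T m = rPathLen x v (m+1) := by
      rw [hTm, rEllPlus, if_pos hmk, hlen, hpl]; ring
    rw [hT]
    exact ⟨hlow, hhigh⟩
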